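/- Let G be a finite simple connected graph with at least 2 vertices and let e be an edge of G such that the graph G − e obtained from G by deleting e is still connected. Then γ_L^2(G − e) ≤ γ_L^2(G) + 2, and for every integer k ≥ 3, γ_L^k(G − e) ≤ γ_L^k(G) + 3. -/

import Mathlib

/-!
Write `G'` for `G - ab`. A shortest walk in `G` either avoids the edge `ab`, and so lives in `G'`,
or crosses it once, so `d_G(u,v)` is the minimum of `d_{G'}(u,v)`, `d_{G'}(u,a) + 1 + d_{G'}(b,v)`
and `d_{G'}(u,b) + 1 + d_{G'}(a,v)`. Hence the truncated `G`-distance from `x` to `z` is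
determined by the truncated `G'`-distances from `x` to `z`, `a` and `b`. So adding `a` and `b` to
a distance-`k` locating-dominating set of `G` gives one of `G'` (a vertex within `k` of `w` in `G`
but not in `G'` is within `k` of `a` or `b` in `G'`), and `γ_L^k(G - e) ≤ γ_L^k(G) + 2` for
every `k`.
-/

open SimpleGraph Finset

/-- `D` is a distance-`k` dominating set of `G`: every vertex outside `D` is within
distance `k` of some vertex of `D`. -/
def IsKDomSet {V : Type*} (G : SimpleGraph V) (k : ℕ) (D : Finset V) : Prop :=
  ∀ u : V, u ∉ D → ∃ w ∈ D, G.dist u w ≤ k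

/-- `R` is a distance-`k` resolving set of `G`: any two distinct vertices are
distinguished by the truncated distance `d_k(x,y) = min (d(x,y)) (k+1)` to some vertex of `R`. -/
def IsKResSet {V : Type*} (G : SimpleGraph V) (k : ℕ) (R : Finset V) : Prop :=
  ∀ x y : V, x ≠ y → ∃ z ∈ R, min (G.dist x z) (k + 1) ≠ min (G.dist y z) (k + 1)

/-- The distance-`k` domination number `γ_k(G)`. -/
noncomputable def kdom {V : Type*} (G : SimpleGraph V) (k : ℕ) : ℕ :=
  sInf {m : ℕ | ∃ D : Finset V, IsKDomSet G k D ∧ D.card = m}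

/-- The distance-`k` dimension `dim_k(G)`. -/
noncomputable def kdim {V : Type*} (G : SimpleGraph V) (k : ℕ) : ℕ :=
  sInf {m : ℕ | ∃ R : Finset V, IsKResSet G k R ∧ R.card = m}

/-- The distance-`k` location-domination number `γ_L^k(G)`. -/
noncomputable def kld {V : Type*} (G : SimpleGraph V) (k : ℕ) : ℕ :=
  sInf {m : ℕ | ∃ S : Finset V, IsKDomSet G k S ∧ IsKResSet G k S ∧ S.card = m}

section

variable {V : Type*} {G : SimpleGraph V} {a b : V} {k : ℕ} {S : Finset V}

local notation "G'" => G.deleteEdges {s(a, b)}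

namespace SimpleGraph

lemma min_dist_deleteEdges_le_length (hc : (G').Connected) {u v : V} (p : G.Walk u v) :
    min ((G').dist u v)
      (min ((G').dist u a + 1 + (G').dist b v) ((G').dist u b + 1 + (G').dist a v)) ≤
      p.length := by
  induction p with
  | nil => simp
  | @cons u w v huw q ih =>
    rw [Walk.length_cons]
    by_cases he : s(u, w) = s(a, b)
    · have daa : (G').dist a a = 0 := dist_self
      have dbb : (G').dist b b = 0 := dist_self
      rcases Sym2.eq_iff.mp he with ⟨rfl, rfl⟩ | ⟨rfl, rfl⟩ <;> omega
    · have huw' : (G').dist u w = 1 :=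
        dist_eq_one_iff_adj.mpr ((deleteEdges_adj ..).mpr ⟨huw, he⟩)
      have tv := hc.dist_triangle (u := u) (v := w) (w := v)
      have ta := hc.dist_triangle (u := u) (v := w) (w := a)
      have tb := hc.dist_triangle (u := u) (v := w) (w := b)
      omega

lemma dist_eq_min_dist_deleteEdges (hab : G.Adj a b) (hc : (G').Connected) (u v : V) :
    G.dist u v = min ((G').dist u v)
      (min ((G').dist u a + 1 + (G').dist b v) ((G').dist u b + 1 + (G').dist a v)) := by
  have hG : G.Connected := hc.mono (G.deleteEdges_le _)
  have anti (x y : V) : G.dist x y ≤ (G').dist x y := (hc x y).dist_anti (G.deleteEdges_le _)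
  have via (x y : V) (hxy : G.Adj x y) : G.dist u v ≤ (G').dist u x + 1 + (G').dist y v :=
    calc G.dist u v ≤ G.dist u x + (G.dist x y + G.dist y v) :=
          hG.dist_triangle.trans (Nat.add_le_add_left hG.dist_triangle _)
      _ ≤ (G').dist u x + (1 + (G').dist y v) := by
          rw [dist_eq_one_iff_adj.mpr hxy]
          exact Nat.add_le_add (anti u x) (Nat.add_le_add_left (anti y v) 1)
      _ = (G').dist u x + 1 + (G').dist y v := (Nat.add_assoc ..).symm
  obtain ⟨p, hp⟩ := hG.exists_walk_length_eq_dist u v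
  exact le_antisymm (le_min (anti u v) (le_min (via a b hab) (via b a hab.symm)))
    (hp ▸ min_dist_deleteEdges_le_length hc p)

lemma min_dist_eq_of_min_dist_deleteEdges_eq (hab : G.Adj a b) (hc : (G').Connected)
    {x y z : V} (ha : min ((G').dist x a) (k + 1) = min ((G').dist y a) (k + 1))
    (hb : min ((G').dist x b) (k + 1) = min ((G').dist y b) (k + 1))
    (hz : min ((G').dist x z) (k + 1) = min ((G').dist y z) (k + 1)) :
    min (G.dist x z) (k + 1) = min (G.dist y z) (k + 1) := by
  rw [dist_eq_min_dist_deleteEdges hab hc, dist_eq_min_dist_deleteEdges hab hc]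
  omega

end SimpleGraph

lemma IsKDomSet.deleteEdges [DecidableEq V] (hab : G.Adj a b) (hc : (G').Connected)
    (hS : IsKDomSet G k S) : IsKDomSet (G') k (insert a (insert b S)) := by
  intro u hu
  by_contra! hfar
  obtain ⟨w, hwS, huw⟩ := hS u fun h => hu (by simp [h])
  have := dist_eq_min_dist_deleteEdges hab hc u w
  have := hfar w (by simp [hwS])
  have := hfar a (by simp)
  have := hfar b (by simp)
  omega

lemma IsKResSet.deleteEdges [DecidableEq V] (hab : G.Adj a b) (hc : (G').Connected)
    (hS : IsKResSet G k S) : IsKResSet (G') k (insert a (insert b S)) := by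
  intro x y hxy
  by_contra! hsame
  obtain ⟨z, hzS, hz⟩ := hS x y hxy
  exact hz (min_dist_eq_of_min_dist_deleteEdges_eq hab hc (hsame a (by simp)) (hsame b (by simp))
    (hsame z (by simp [hzS])))

lemma kld_le_card (hdom : IsKDomSet G k S) (hres : IsKResSet G k S) : kld G k ≤ S.card :=
  Nat.sInf_le ⟨S, hdom, hres, rfl⟩

lemma isKDomSet_univ [Fintype V] : IsKDomSet G k univ :=
  fun u hu => absurd (mem_univ u) hu

lemma isKResSet_univ [Fintype V] (hG : G.Connected) : IsKResSet G k univ := by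
  refine fun x y hxy => ⟨x, mem_univ x, ?_⟩
  have := hG.pos_dist_of_ne hxy.symm
  simp only [dist_self]
  omega

lemma exists_card_eq_kld [Fintype V] (hG : G.Connected) :
    ∃ S : Finset V, IsKDomSet G k S ∧ IsKResSet G k S ∧ S.card = kld G k :=
  Nat.sInf_mem (s := {m | ∃ S : Finset V, IsKDomSet G k S ∧ IsKResSet G k S ∧ S.card = m})
    ⟨_, univ, isKDomSet_univ, isKResSet_univ hG, rfl⟩

theorem kld_deleteEdges_le [Fintype V] (hab : G.Adj a b) (hc : (G').Connected) :
    kld (G') k ≤ kld G k + 2 := by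
  classical
  obtain ⟨S, hdom, hres, hS⟩ := exists_card_eq_kld (k := k) (hc.mono (G.deleteEdges_le _))
  calc kld (G') k ≤ (insert a (insert b S)).card :=
        kld_le_card (hdom.deleteEdges hab hc) (hres.deleteEdges hab hc)
    _ ≤ S.card + 2 := (card_insert_le _ _).trans (Nat.add_le_add_right (card_insert_le _ _) 1)
    _ = kld G k + 2 := by rw [hS]

end

theorem stmt_18_general {V : Type*} [Fintype V] (G : SimpleGraph V) (e : Sym2 V) (he : e ∈ G.edgeSet)
    (hc : (G.deleteEdges {e}).Connected) :
    kld (G.deleteEdges {e}) 2 ≤ kld G 2 + 2 ∧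
      ∀ k : ℕ, 3 ≤ k → kld (G.deleteEdges {e}) k ≤ kld G k + 3 := by
  induction e using Sym2.ind with
  | _ a b =>
    have hle (k : ℕ) := kld_deleteEdges_le (k := k) (G.mem_edgeSet.mp he) hc
    exact ⟨hle 2, fun k _ => (hle k).trans (Nat.le_succ _)⟩

/-- If `G` is a finite simple connected graph with at least 2 vertices and `e` an edge of
`G` with `G - e` connected, then `γ_L^2(G - e) ≤ γ_L^2(G) + 2`, and for every `k ≥ 3`,
`γ_L^k(G - e) ≤ γ_L^k(G) + 3`. -/
theorem stmt_18 {V : Type*} [Fintype V] (G : SimpleGraph V) (hG : G.Connected)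
    (hn : 2 ≤ Fintype.card V) (e : Sym2 V) (he : e ∈ G.edgeSet)
    (hc : (G.deleteEdges {e}).Connected) :
    kld (G.deleteEdges {e}) 2 ≤ kld G 2 + 2 ∧
      ∀ k : ℕ, 3 ≤ k → kld (G.deleteEdges {e}) k ≤ kld G k + 3 :=
  stmt_18_general G e he hc
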